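/- Let γ be a generalised limit on L_∞(0,∞) and let A ∈ M_{1,∞}^+. Then the map s ↦ s^{−1}·ζ_{γ∘σ_s}(A) = γ(t ↦ (1/t)Tr(A^{1+s/t})) is a convex (and hence continuous) function of s on (0,∞). -/

import Mathlib

open Filter MeasureTheory Set
open scoped ENNReal NNReal

noncomputable section

variable {H : Type*} [NormedAddCommGroup H] [InnerProductSpace ℂ H] [CompleteSpace H]

/-- The `n`-th approximation number of `T` (equal to the `(n+1)`-th singular value
`μ(n+1, T)` for a compact operator `T` on a Hilbert space): the distance from `T`
to the set of operators of rank at most `n`. -/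
noncomputable def mu (T : H →L[ℂ] H) (n : ℕ) : ℝ :=
  sInf ((fun F : H →L[ℂ] H => ‖T - F‖) ''
    {F : H →L[ℂ] H | ∃ _ : FiniteDimensional ℂ (LinearMap.range (F : H →ₗ[ℂ] H)),
        Module.finrank ℂ (LinearMap.range (F : H →ₗ[ℂ] H)) ≤ n})

/-- The singular value step function `μ(·, T)` on `(0, ∞)`, equal to `μ(n, T)` on `[n-1, n)`. -/
noncomputable def muFun (T : H →L[ℂ] H) (t : ℝ) : ℝ := mu T ⌊t⌋₊

/-- Membership in the Dixmier ideal `M_{1,∞}`: `T` is compact and the partial sums of the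
singular values grow at most logarithmically. -/
def MemM1 (T : H →L[ℂ] H) : Prop :=
  IsCompactOperator (⇑T) ∧
    ∃ C : ℝ, ∀ n : ℕ, ∑ k ∈ Finset.range (n + 1), mu T k ≤ C * Real.log (n + 2)

/-- The norm `‖T‖_{1,∞} = sup_{n ≥ 1} (1/log(1+n)) ∑_{k=1}^n μ(k,T)`. -/
noncomputable def norm1Inf (T : H →L[ℂ] H) : ℝ :=
  ⨆ n : ℕ, (Real.log (n + 2))⁻¹ * ∑ k ∈ Finset.range (n + 1), mu T k

/-- Hardy–Littlewood majorization `B ≺≺ A`. -/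
def Majorized (B A : H →L[ℂ] H) : Prop :=
  ∀ t : ℝ, 0 ≤ t → ∫ s in (0:ℝ)..t, muFun B s ≤ ∫ s in (0:ℝ)..t, muFun A s

/-- `T` is trace class iff its singular values are summable. -/
def TraceClass (T : H →L[ℂ] H) : Prop := Summable (mu T)

/-- The trace of `T` computed along the Hilbert basis `b` (complex-valued;
junk value when the sum does not converge). -/
noncomputable def trC {ι : Type*} (b : HilbertBasis ι ℂ H) (T : H →L[ℂ] H) : ℂ :=
  ∑' i, (inner ℂ (b i) (T (b i)) : ℂ)

/-- The (real part of the) trace of `T` along the Hilbert basis `b`. -/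
noncomputable def trR {ι : Type*} (b : HilbertBasis ι ℂ H) (T : H →L[ℂ] H) : ℝ :=
  (trC b T).re

/-- A generalised limit: a positive normalised linear functional on `L_∞(0,∞)`
(modelled as the space of bounded functions on `ℝ`) vanishing on functions that
tend to `0` at `+∞`. -/
structure GeneralisedLimit : Type where
  toFun : lp (fun _ : ℝ => ℝ) ∞ →ₗ[ℝ] ℝ
  pos' : ∀ f : lp (fun _ : ℝ => ℝ) ∞, (∀ t, 0 ≤ f t) → 0 ≤ toFun f
  normalized' : ∀ f : lp (fun _ : ℝ => ℝ) ∞, (∀ t, f t = 1) → toFun f = 1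
  vanishing' : ∀ f : lp (fun _ : ℝ => ℝ) ∞,
    Tendsto (fun t => f t) atTop (nhds (0:ℝ)) → toFun f = 0

open scoped Classical in
/-- Application of a generalised limit to an arbitrary function
(junk value `0` if the function is not bounded). -/
noncomputable def glim (γ : GeneralisedLimit) (f : ℝ → ℝ) : ℝ :=
  if h : Memℓp f ∞ then γ.toFun ⟨f, h⟩ else 0

/-- Application of a generalised limit to a complex-valued function. -/
noncomputable def glimC (γ : GeneralisedLimit) (f : ℝ → ℂ) : ℂ :=
  ⟨glim γ fun t => (f t).re, glim γ fun t => (f t).im⟩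

/-- Dilation invariance of a generalised limit: invariance under all `σ_s`, `s>0`,
where `(σ_s x)(t) = x(t/s)`. -/
def DilationInvariant (γ : GeneralisedLimit) : Prop :=
  ∀ s : ℝ, 0 < s → ∀ f : ℝ → ℝ, glim γ (fun t => f (t / s)) = glim γ f

/-- The Cesàro operator `(Mx)(t) = (1/log t) ∫_1^t x(s) ds/s`. -/
noncomputable def cesaro (x : ℝ → ℝ) : ℝ → ℝ :=
  fun t => (Real.log t)⁻¹ * ∫ s in (1:ℝ)..t, x s / s

/-- The Cesàro operator on complex-valued functions. -/
noncomputable def cesaroC (x : ℝ → ℂ) : ℝ → ℂ :=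
  fun t => ((Real.log t)⁻¹ : ℂ) * ∫ s in (1:ℝ)..t, x s / (s:ℂ)

/-- The real part `Re(A) = (A + A^*)/2`. -/
noncomputable def reOp (A : H →L[ℂ] H) : H →L[ℂ] H :=
  (2 : ℂ)⁻¹ • (A + ContinuousLinearMap.adjoint A)

/-- The imaginary part `Im(A) = (A - A^*)/(2i)`. -/
noncomputable def imOp (A : H →L[ℂ] H) : H →L[ℂ] H :=
  (2 * Complex.I)⁻¹ • (A - ContinuousLinearMap.adjoint A)

/-- The positive part of a self-adjoint operator, via the functional calculus. -/
noncomputable def posPartOp (A : H →L[ℂ] H) : H →L[ℂ] H := cfc (fun x : ℝ => max x 0) A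

/-- The negative part of a self-adjoint operator, via the functional calculus. -/
noncomputable def negPartOp (A : H →L[ℂ] H) : H →L[ℂ] H := cfc (fun x : ℝ => max (-x) 0) A

/-- The square root `B^{1/2}` of a positive operator. -/
noncomputable def sqrtOp (A : H →L[ℂ] H) : H →L[ℂ] H := cfc Real.sqrt A

/-- Extension of a functional from the positive cone to all operators via the
Jordan decomposition `A = (Re(A)_+ - Re(A)_-) + i(Im(A)_+ - Im(A)_-)`. -/
noncomputable def jordanExt (φ : (H →L[ℂ] H) → ℂ) (A : H →L[ℂ] H) : ℂ :=
  (φ (posPartOp (reOp A)) - φ (negPartOp (reOp A))) +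
    Complex.I * (φ (posPartOp (imOp A)) - φ (negPartOp (imOp A)))

/-- The function `t ↦ (1/t) Tr(A^{1+1/t})` (for `t > 0`, extended by `0`). -/
noncomputable def zetaFn {ι : Type*} (b : HilbertBasis ι ℂ H) (A : H →L[ℂ] H) : ℝ → ℝ :=
  fun t => if 0 < t then t⁻¹ * trR b (cfc (fun x : ℝ => x ^ (1 + t⁻¹)) A) else 0

/-- The function `t ↦ (1/t) Tr(A^{1+1/t} B)` (for `t > 0`, extended by `0`). -/
noncomputable def zetaFnB {ι : Type*} (b : HilbertBasis ι ℂ H) (A B : H →L[ℂ] H) : ℝ → ℂ :=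
  fun t => if 0 < t then (t : ℂ)⁻¹ * trC b ((cfc (fun x : ℝ => x ^ (1 + t⁻¹)) A) * B) else 0

/-- The zeta functional `ζ_γ(A) = γ(t ↦ (1/t) Tr(A^{1+1/t}))` for positive `A`. -/
noncomputable def zeta {ι : Type*} (γ : GeneralisedLimit) (b : HilbertBasis ι ℂ H)
    (A : H →L[ℂ] H) : ℝ :=
  glim γ (zetaFn b A)

/-- `ζ_γ` extended to all of `M_{1,∞}` via the Jordan decomposition. -/
noncomputable def zetaAll {ι : Type*} (γ : GeneralisedLimit) (b : HilbertBasis ι ℂ H)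
    (A : H →L[ℂ] H) : ℂ :=
  jordanExt (fun P => (zeta γ b P : ℂ)) A

/-- The functional `ζ_{γ,B}(A) = γ(t ↦ (1/t) Tr(A^{1+1/t} B))` for positive `A`. -/
noncomputable def zetaB {ι : Type*} (γ : GeneralisedLimit) (b : HilbertBasis ι ℂ H)
    (A B : H →L[ℂ] H) : ℂ :=
  glimC γ (zetaFnB b A B)

/-- `ζ_{γ,B}` extended to all of `M_{1,∞}` (in the variable `A`) via the Jordan
decomposition. -/
noncomputable def zetaBAll {ι : Type*} (γ : GeneralisedLimit) (b : HilbertBasis ι ℂ H)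
    (A B : H →L[ℂ] H) : ℂ :=
  jordanExt (fun P => zetaB γ b P B) A

/-- The heat kernel function `t ↦ (1/t) Tr(exp(-(tA)^{-q}))` (for `t > 0`, extended by `0`),
where `exp(-(tu)^{-q})` is interpreted as `0` at `u = 0`. -/
noncomputable def hkFn {ι : Type*} (q : ℝ) (b : HilbertBasis ι ℂ H) (A : H →L[ℂ] H) : ℝ → ℝ :=
  fun t => if 0 < t then
    t⁻¹ * trR b (cfc (fun u : ℝ => if u ≤ 0 then 0 else Real.exp (-((t * u) ^ (-q)))) A)
  else 0

/-- The heat kernel functional `ξ_ω(A) = (ω ∘ M)(t ↦ (1/t) Tr(exp(-(tA)^{-q})))`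
for positive `A`. -/
noncomputable def xi {ι : Type*} (ω : GeneralisedLimit) (q : ℝ) (b : HilbertBasis ι ℂ H)
    (A : H →L[ℂ] H) : ℝ :=
  glim ω (cesaro (hkFn q b A))

/-- `ξ_ω` extended to all of `M_{1,∞}` via the Jordan decomposition. -/
noncomputable def xiAll {ι : Type*} (ω : GeneralisedLimit) (q : ℝ) (b : HilbertBasis ι ℂ H)
    (A : H →L[ℂ] H) : ℂ :=
  jordanExt (fun P => (xi ω q b P : ℂ)) A

/-- The Dixmier trace `τ_ω(A) = ω(t ↦ (1/log(1+t)) ∫_0^t μ(s,A) ds)` for positive `A`. -/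
noncomputable def dix (ω : GeneralisedLimit) (A : H →L[ℂ] H) : ℝ :=
  glim ω (fun t => if 0 < t then (Real.log (1 + t))⁻¹ * ∫ s in (0:ℝ)..t, muFun A s else 0)

/-- The Dixmier trace extended to all of `M_{1,∞}` via the Jordan decomposition. -/
noncomputable def dixAll (ω : GeneralisedLimit) (A : H →L[ℂ] H) : ℂ :=
  jordanExt (fun P => (dix ω P : ℂ)) A

/-- The generalised limit `ω ∘ log`, `(ω ∘ log)(z) = ω(t ↦ z(log t))`. -/
noncomputable def glimLog (ω : GeneralisedLimit) (f : ℝ → ℝ) : ℝ :=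
  glim ω (fun t => if 1 < t then f (Real.log t) else 0)

/-- `ω ∘ log` applied to a complex-valued function. -/
noncomputable def glimLogC (ω : GeneralisedLimit) (f : ℝ → ℂ) : ℂ :=
  ⟨glimLog ω fun t => (f t).re, glimLog ω fun t => (f t).im⟩

/-- Dilation invariance of the generalised limit `ω ∘ log`. -/
def LogDilationInvariant (ω : GeneralisedLimit) : Prop :=
  ∀ s : ℝ, 0 < s → ∀ f : ℝ → ℝ, glimLog ω (fun t => f (t / s)) = glimLog ω f

/-- The (nonlinear) operator `T`: `(TA)(t) = (1/log(1+t)) Tr((A - 1/t) e^A(1/t, ∞))`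
(for `t > 0`, extended by `0`). -/
noncomputable def Tfun {ι : Type*} (b : HilbertBasis ι ℂ H) (A : H →L[ℂ] H) : ℝ → ℝ :=
  fun t => if 0 < t then
    (Real.log (1 + t))⁻¹ * trR b (cfc (fun x : ℝ => if t⁻¹ < x then x - t⁻¹ else 0) A)
  else 0

/-- A fully symmetric functional on `M_{1,∞}`: linear on `M_{1,∞}`, real-valued on the
positive cone, and monotone with respect to Hardy–Littlewood majorization. -/
structure FullySymmetricFunctional (H : Type*) [NormedAddCommGroup H]
    [InnerProductSpace ℂ H] [CompleteSpace H] : Type _ where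
  toFun : (H →L[ℂ] H) → ℂ
  add' : ∀ A B : H →L[ℂ] H, MemM1 A → MemM1 B → toFun (A + B) = toFun A + toFun B
  smul' : ∀ (c : ℂ) (A : H →L[ℂ] H), MemM1 A → toFun (c • A) = c * toFun A
  real' : ∀ A : H →L[ℂ] H, MemM1 A → A.IsPositive → (toFun A).im = 0
  mono' : ∀ A B : H →L[ℂ] H, MemM1 A → MemM1 B → A.IsPositive → B.IsPositive →
    Majorized B A → (toFun B).re ≤ (toFun A).re

/-- The norm of a fully symmetric functional in the dual space of `M_{1,∞}`. -/
noncomputable def fsNorm {H : Type*} [NormedAddCommGroup H] [InnerProductSpace ℂ H]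
    [CompleteSpace H] (φ : FullySymmetricFunctional H) : ℝ :=
  sSup {r : ℝ | ∃ A : H →L[ℂ] H, MemM1 A ∧ norm1Inf A ≤ 1 ∧ r = ‖φ.toFun A‖}

/-- `ξ_{ω,B,f}(A) = (ω ∘ M)(t ↦ (1/t) Tr(f(tA) B))` for positive `A`. -/
noncomputable def xiBf {ι : Type*} (ω : GeneralisedLimit) (b : HilbertBasis ι ℂ H)
    (f : ℝ → ℝ) (B A : H →L[ℂ] H) : ℂ :=
  ⟨glim ω (cesaro fun t => if 0 < t then
      t⁻¹ * (trC b ((cfc (fun x : ℝ => f (t * x)) A) * B)).re else 0),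
   glim ω (cesaro fun t => if 0 < t then
      t⁻¹ * (trC b ((cfc (fun x : ℝ => f (t * x)) A) * B)).im else 0)⟩

/-- `ξ_{ω,B,f}` extended to all of `M_{1,∞}` (in the variable `A`) via the Jordan
decomposition. -/
noncomputable def xiBfAll {ι : Type*} (ω : GeneralisedLimit) (b : HilbertBasis ι ℂ H)
    (f : ℝ → ℝ) (B A : H →L[ℂ] H) : ℂ :=
  jordanExt (fun P => xiBf ω b f B P) A

/-!
For fixed `t > 0` the map `s ↦ t⁻¹ Tr(A^{1+s/t})` is convex: for every vector `x`,
`p ↦ ⟪x, A^p x⟫` is convex because `p ↦ u^p` is convex for every `u ≥ 0` in the spectrum and the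
continuous functional calculus is monotone, and summing over a Hilbert basis keeps convexity.
A positive functional vanishing on functions that tend to `0` turns eventual pointwise convexity
into convexity, and a convex function on an open interval is continuous.

Both junk values are compatible with this. A divergent trace series gives `trR = 0`, and if the
series diverges at some exponent `p > 1` it diverges at all smaller ones, so every
`t ↦ t⁻¹ Tr(A^{1+s/t})` vanishes for large `t`. `glim` is `0` on unbounded functions, and these
functions are the dilates `s⁻¹ σ_s` of `zetaFn`, so either all of them are bounded or the map
is identically `0`.
-/

open scoped InnerProductSpace

theorem glim_eq_apply (γ : GeneralisedLimit) {f : ℝ → ℝ} (hf : Memℓp f ∞) :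
    glim γ f = γ.toFun ⟨f, hf⟩ := by
  rw [glim, dif_pos hf]

theorem glim_of_not_memℓp (γ : GeneralisedLimit) {f : ℝ → ℝ} (hf : ¬Memℓp f ∞) :
    glim γ f = 0 := by
  rw [glim, dif_neg hf]

theorem glim_mul_add_mul (γ : GeneralisedLimit) {f g : ℝ → ℝ} (hf : Memℓp f ∞)
    (hg : Memℓp g ∞) (a c : ℝ) :
    glim γ (fun t => a * f t + c * g t) = a * glim γ f + c * glim γ g := by
  have hfg : Memℓp (fun t => a * f t + c * g t) ∞ := (hf.const_mul a).add (hg.const_mul c)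
  rw [glim_eq_apply γ hfg, glim_eq_apply γ hf, glim_eq_apply γ hg, ← smul_eq_mul a,
    ← smul_eq_mul c, ← map_smul, ← map_smul, ← map_add]
  rfl

theorem glim_le_glim_of_eventuallyLE (γ : GeneralisedLimit) {f g : ℝ → ℝ} (hf : Memℓp f ∞)
    (hg : Memℓp g ∞) (hfg : f ≤ᶠ[atTop] g) : glim γ f ≤ glim γ g := by
  -- `g - f` differs from a nonnegative function by `min (g - f) 0`, which is eventually zero
  set k : ℝ → ℝ := fun t => min (g t - f t) 0
  have hk : Memℓp k ∞ := by
    obtain ⟨C, hC⟩ := memℓp_infty_iff.1 (hg.sub hf)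
    refine memℓp_infty ⟨C, ?_⟩
    rintro _ ⟨t, rfl⟩
    refine le_trans ?_ (hC ⟨t, rfl⟩)
    rcases le_total (g t - f t) 0 with h | h <;> simp [k, h]
  have hk_zero : γ.toFun ⟨k, hk⟩ = 0 := by
    refine γ.vanishing' _ (tendsto_const_nhds.congr' ?_)
    filter_upwards [hfg] with t ht
    simp [k, sub_nonneg.2 ht]
  have hpos := γ.pos' (⟨g, hg⟩ - ⟨f, hf⟩ - ⟨k, hk⟩) fun t => by
    simp only [lp.coeFn_sub, Pi.sub_apply]
    exact sub_nonneg.2 (min_le_left _ _)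
  rw [map_sub, map_sub, hk_zero] at hpos
  rw [glim_eq_apply γ hf, glim_eq_apply γ hg]
  linarith

theorem convexOn_glim {E : Type*} [AddCommGroup E] [Module ℝ E] (γ : GeneralisedLimit)
    {s : Set E} (hs : Convex ℝ s) (F : E → ℝ → ℝ) (hF : ∀ x ∈ s, Memℓp (F x) ∞)
    (hFconv : ∀ ⦃x⦄, x ∈ s → ∀ ⦃y⦄, y ∈ s → ∀ ⦃a c : ℝ⦄, 0 ≤ a → 0 ≤ c → a + c = 1 →
      F (a • x + c • y) ≤ᶠ[atTop] fun t => a * F x t + c * F y t) :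
    ConvexOn ℝ s fun x => glim γ (F x) := by
  refine ⟨hs, fun x hx y hy a c ha hc hac => ?_⟩
  calc glim γ (F (a • x + c • y))
      ≤ glim γ (fun t => a * F x t + c * F y t) :=
        glim_le_glim_of_eventuallyLE γ (hF _ (hs hx hy ha hc hac))
          (((hF x hx).const_mul a).add ((hF y hy).const_mul c)) (hFconv hx hy ha hc hac)
    _ = a • glim γ (F x) + c • glim γ (F y) := glim_mul_add_mul γ (hF x hx) (hF y hy) a c

theorem memℓp_infty_mul_comp_div_iff {f : ℝ → ℝ} {c s : ℝ} (hc : c ≠ 0) (hs : s ≠ 0) :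
    Memℓp (fun t => c * f (t / s)) ∞ ↔ Memℓp f ∞ := by
  have hsurj : Function.Surjective fun t : ℝ => t / s :=
    fun t => ⟨t * s, mul_div_cancel_right₀ t hs⟩
  have hcomp : Memℓp (fun t => f (t / s)) ∞ ↔ Memℓp f ∞ := by
    simp only [memℓp_infty_iff]
    rw [← hsurj.range_comp fun t => ‖f t‖]
    rfl
  rw [← hcomp]
  refine ⟨fun h => ?_, fun h => h.const_mul c⟩
  simpa [inv_mul_cancel_left₀ hc] using h.const_mul c⁻¹

theorem convexOn_rpow_left_of_nonneg {u : ℝ} (hu : 0 ≤ u) :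
    ConvexOn ℝ (Ioi 0) fun p : ℝ => u ^ p := by
  rcases hu.eq_or_lt with rfl | hu
  · exact (convexOn_const 0 (convex_Ioi 0)).congr fun p hp => (Real.zero_rpow hp.ne').symm
  · exact (convexOn_rpow_left hu).subset (subset_univ _) (convex_Ioi 0)

theorem Real.rpow_le_rpow_sub_mul_rpow {u M p q : ℝ} (hu : 0 ≤ u) (huM : u ≤ M) (hp : 0 < p)
    (hpq : p ≤ q) : u ^ q ≤ M ^ (q - p) * u ^ p := by
  rcases hu.eq_or_lt with rfl | hu
  · rw [Real.zero_rpow (hp.trans_le hpq).ne', Real.zero_rpow hp.ne', mul_zero]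
  · calc u ^ q = u ^ (q - p) * u ^ p := by rw [← Real.rpow_add hu, sub_add_cancel]
      _ ≤ M ^ (q - p) * u ^ p := by gcongr

theorem convexOn_tsum {ι E : Type*} [AddCommGroup E] [Module ℝ E] {s : Set E}
    (hs : Convex ℝ s) {f : ι → E → ℝ} (hf : ∀ i, ConvexOn ℝ s (f i))
    (hsum : ∀ x ∈ s, Summable fun i => f i x) : ConvexOn ℝ s fun x => ∑' i, f i x := by
  refine ⟨hs, fun x hx y hy a c ha hc hac => ?_⟩
  have hx' := (hsum x hx).mul_left a
  have hy' := (hsum y hy).mul_left c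
  calc ∑' i, f i (a • x + c • y) ≤ ∑' i, (a * f i x + c * f i y) :=
        (hsum _ (hs hx hy ha hc hac)).tsum_le_tsum (fun i => (hf i).2 hx hy ha hc hac)
          (hx'.add hy')
    _ = a • ∑' i, f i x + c • ∑' i, f i y := by
        rw [hx'.tsum_add hy', tsum_mul_left, tsum_mul_left, smul_eq_mul, smul_eq_mul]

theorem re_inner_apply_le_of_le {𝕜 E : Type*} [RCLike 𝕜] [NormedAddCommGroup E]
    [InnerProductSpace 𝕜 E] {S T : E →L[𝕜] E} (h : S ≤ T) (x : E) :
    RCLike.re ⟪x, S x⟫_𝕜 ≤ RCLike.re ⟪x, T x⟫_𝕜 := by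
  have := ((ContinuousLinearMap.le_def S T).1 h).re_inner_nonneg_right x
  rw [sub_apply, inner_sub_right, map_sub] at this
  linarith

section Trace

variable {ι : Type*}

theorem trR_eq_tsum_re_inner (b : HilbertBasis ι ℂ H) {T : H →L[ℂ] H}
    (hT : IsSelfAdjoint T) : trR b T = ∑' i, RCLike.re ⟪b i, T (b i)⟫_ℂ := by
  have hreal : ∀ i, ⟪b i, T (b i)⟫_ℂ = (RCLike.re ⟪b i, T (b i)⟫_ℂ : ℂ) := fun i =>
    (hT.isSymmetric.coe_re_inner_self_apply (b i)).symm
  rw [trR, trC, tsum_congr hreal, ← Complex.ofReal_tsum, Complex.ofReal_re]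

theorem convexOn_re_inner_cfc {A : H →L[ℂ] H} {s : Set ℝ} (hs : Convex ℝ s) {g : ℝ → ℝ → ℝ}
    (hg : ∀ p ∈ s, ContinuousOn (g p) (spectrum ℝ A))
    (hgconv : ∀ u ∈ spectrum ℝ A, ConvexOn ℝ s fun p => g p u) (x : H) :
    ConvexOn ℝ s fun p => RCLike.re ⟪x, cfc (g p) A x⟫_ℂ := by
  refine ⟨hs, fun p hp q hq a c ha hc hac => ?_⟩
  have hle : cfc (g (a • p + c • q)) A ≤ cfc (fun u => a * g p u + c * g q u) A :=
    cfc_mono (fun u hu => (hgconv u hu).2 hp hq ha hc hac) (hg _ (hs hp hq ha hc hac))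
      ((continuousOn_const.mul (hg p hp)).add (continuousOn_const.mul (hg q hq)))
  have hsplit : cfc (fun u => a * g p u + c * g q u) A = a • cfc (g p) A + c • cfc (g q) A := by
    rw [cfc_add A (fun u => a * g p u) (fun u => c * g q u) (continuousOn_const.mul (hg p hp))
        (continuousOn_const.mul (hg q hq)),
      cfc_const_mul a _ A (hg p hp), cfc_const_mul c _ A (hg q hq)]
  calc RCLike.re ⟪x, cfc (g (a • p + c • q)) A x⟫_ℂ
      ≤ RCLike.re ⟪x, (a • cfc (g p) A + c • cfc (g q) A) x⟫_ℂ :=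
        hsplit ▸ re_inner_apply_le_of_le hle x
    _ = a • RCLike.re ⟪x, cfc (g p) A x⟫_ℂ + c • RCLike.re ⟪x, cfc (g q) A x⟫_ℂ := by
        simp

theorem summable_re_inner_cfc_rpow_of_le {A : H →L[ℂ] H} (hA : 0 ≤ A) (v : ι → H) {p q : ℝ}
    (hp : 0 < p) (hpq : p ≤ q)
    (hsum : Summable fun i => RCLike.re ⟪v i, cfc (fun u : ℝ => u ^ p) A (v i)⟫_ℂ) :
    Summable fun i => RCLike.re ⟪v i, cfc (fun u : ℝ => u ^ q) A (v i)⟫_ℂ := by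
  obtain ⟨M, hM⟩ := (spectrum.isCompact (𝕜 := ℝ) A).bddAbove
  have hcont : ∀ r : ℝ, 0 ≤ r → ContinuousOn (fun u : ℝ => u ^ r) (spectrum ℝ A) :=
    fun r hr => (Real.continuous_rpow_const hr).continuousOn
  have hle : cfc (fun u : ℝ => u ^ q) A ≤ cfc (fun u => M ^ (q - p) * u ^ p) A :=
    cfc_mono (fun u hu => Real.rpow_le_rpow_sub_mul_rpow (spectrum_nonneg_of_nonneg hA hu)
      (hM hu) hp hpq) (hcont q (hp.le.trans hpq)) (continuousOn_const.mul (hcont p hp.le))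
  rw [cfc_const_mul _ _ A (hcont p hp.le)] at hle
  refine (hsum.mul_left (M ^ (q - p))).of_nonneg_of_le (fun i => ?_) fun i => ?_
  · exact ((ContinuousLinearMap.nonneg_iff_isPositive _).1 (cfc_nonneg fun u hu =>
      Real.rpow_nonneg (spectrum_nonneg_of_nonneg hA hu) q)).re_inner_nonneg_right (v i)
  · have hi := re_inner_apply_le_of_le hle (v i)
    rwa [smul_apply, RCLike.real_smul_eq_coe_smul (K := ℂ), inner_smul_right,
      RCLike.re_ofReal_mul] at hi

theorem convexOn_trR_cfc_rpow (b : HilbertBasis ι ℂ H) {A : H →L[ℂ] H} (hA : 0 ≤ A)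
    {s : Set ℝ} (hs : Convex ℝ s) (hs₀ : s ⊆ Ioi 0)
    (hsum : ∀ p ∈ s, Summable fun i => RCLike.re ⟪b i, cfc (fun u : ℝ => u ^ p) A (b i)⟫_ℂ) :
    ConvexOn ℝ s fun p => trR b (cfc (fun u : ℝ => u ^ p) A) := by
  refine (convexOn_tsum hs (fun i => ?_) hsum).congr fun p _ =>
    (trR_eq_tsum_re_inner b (cfc_predicate _ A)).symm
  exact convexOn_re_inner_cfc hs
    (fun p hp => (Real.continuous_rpow_const (hs₀ hp).le).continuousOn)
    (fun u hu => (convexOn_rpow_left_of_nonneg (spectrum_nonneg_of_nonneg hA hu)).subset hs₀ hs)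
    (b i)

theorem trR_cfc_rpow_eq_zero (b : HilbertBasis ι ℂ H) {A : H →L[ℂ] H} (hA : 0 ≤ A)
    {p q : ℝ} (hp : 0 < p) (hpq : p ≤ q)
    (hq : ¬Summable fun i => RCLike.re ⟪b i, cfc (fun u : ℝ => u ^ q) A (b i)⟫_ℂ) :
    trR b (cfc (fun u : ℝ => u ^ p) A) = 0 := by
  rw [trR_eq_tsum_re_inner b (cfc_predicate _ A),
    tsum_eq_zero_of_not_summable (mt (summable_re_inner_cfc_rpow_of_le hA _ hp hpq) hq)]

end Trace

section DilatedZeta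

variable {ι : Type*} (b : HilbertBasis ι ℂ H) (A : H →L[ℂ] H)

def dilatedZetaFn (s : ℝ) : ℝ → ℝ :=
  fun t => if 0 < t then t⁻¹ * trR b (cfc (fun x : ℝ => x ^ (1 + s / t)) A) else 0

theorem dilatedZetaFn_eq {s : ℝ} (hs : 0 < s) :
    dilatedZetaFn b A s = fun t => s⁻¹ * zetaFn b A (t / s) := by
  funext t
  by_cases ht : 0 < t
  · rw [dilatedZetaFn, zetaFn, if_pos ht, if_pos (div_pos ht hs), inv_div]
    field_simp
  · rw [dilatedZetaFn, zetaFn, if_neg ht, if_neg (by rwa [div_pos_iff_of_pos_right hs]),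
      mul_zero]

theorem memℓp_dilatedZetaFn_iff {s : ℝ} (hs : 0 < s) :
    Memℓp (dilatedZetaFn b A s) ∞ ↔ Memℓp (zetaFn b A) ∞ := by
  rw [dilatedZetaFn_eq b A hs]
  exact memℓp_infty_mul_comp_div_iff (inv_ne_zero hs.ne') hs.ne'

variable {A}

theorem dilatedZetaFn_eventuallyEq_zero (hA : 0 ≤ A) {p : ℝ} (hp : 1 < p)
    (hp_sum : ¬Summable fun i => RCLike.re ⟪b i, cfc (fun u : ℝ => u ^ p) A (b i)⟫_ℂ)
    {s : ℝ} (hs : 0 < s) : dilatedZetaFn b A s =ᶠ[atTop] 0 := by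
  filter_upwards [eventually_gt_atTop (s / (p - 1))] with t ht
  have ht₀ : 0 < t := (div_pos hs (sub_pos.2 hp)).trans ht
  have hst : 1 + s / t ≤ p := by
    rw [div_lt_iff₀ (sub_pos.2 hp)] at ht
    have : s / t ≤ p - 1 := by rw [div_le_iff₀ ht₀]; linarith
    linarith
  rw [dilatedZetaFn, if_pos ht₀, trR_cfc_rpow_eq_zero b hA (by positivity) hst hp_sum, mul_zero]
  rfl

theorem eventually_dilatedZetaFn_le (hA : 0 ≤ A) {s₁ s₂ : ℝ} (hs₁ : 0 < s₁) (hs₂ : 0 < s₂)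
    {a c : ℝ} (ha : 0 ≤ a) (hc : 0 ≤ c) (hac : a + c = 1) :
    dilatedZetaFn b A (a • s₁ + c • s₂) ≤ᶠ[atTop]
      fun t => a * dilatedZetaFn b A s₁ t + c * dilatedZetaFn b A s₂ t := by
  by_cases hsum : ∀ p ∈ Ioi (1 : ℝ),
      Summable fun i => RCLike.re ⟪b i, cfc (fun u : ℝ => u ^ p) A (b i)⟫_ℂ
  · refine Eventually.of_forall fun t => ?_
    by_cases ht : 0 < t
    · have hconv := (convexOn_trR_cfc_rpow b hA (convex_Ioi 1) (Ioi_subset_Ioi zero_le_one)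
        hsum).2 (show 1 + s₁ / t ∈ Ioi 1 by simp; positivity)
        (show 1 + s₂ / t ∈ Ioi 1 by simp; positivity) ha hc hac
      have hexp : a • (1 + s₁ / t) + c • (1 + s₂ / t) = 1 + (a • s₁ + c • s₂) / t := by
        simp only [smul_eq_mul]
        field_simp
        linear_combination t * hac
      rw [hexp] at hconv
      simp only [smul_eq_mul] at hconv
      simp only [dilatedZetaFn, if_pos ht, smul_eq_mul]
      have := mul_le_mul_of_nonneg_left hconv (inv_nonneg.2 ht.le)
      linarith
    · simp [dilatedZetaFn, ht]
  · obtain ⟨p, hp, hp_sum⟩ := not_forall₂.1 hsum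
    have hs : 0 < a • s₁ + c • s₂ := convex_Ioi (0 : ℝ) hs₁ hs₂ ha hc hac
    filter_upwards [dilatedZetaFn_eventuallyEq_zero b hA hp hp_sum hs,
      dilatedZetaFn_eventuallyEq_zero b hA hp hp_sum hs₁,
      dilatedZetaFn_eventuallyEq_zero b hA hp hp_sum hs₂] with t h h₁ h₂
    simp only [h, h₁, h₂, Pi.zero_apply, mul_zero, add_zero, le_refl]

end DilatedZeta

theorem stmt6_general {ι : Type*} (b : HilbertBasis ι ℂ H) (γ : GeneralisedLimit)
    (A : H →L[ℂ] H) (hApos : A.IsPositive) :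
    ConvexOn ℝ (Set.Ioi (0 : ℝ)) (fun s : ℝ =>
      glim γ fun t =>
        if 0 < t then t⁻¹ * trR b (cfc (fun x : ℝ => x ^ (1 + s / t)) A) else 0) ∧
    ContinuousOn (fun s : ℝ =>
      glim γ fun t =>
        if 0 < t then t⁻¹ * trR b (cfc (fun x : ℝ => x ^ (1 + s / t)) A) else 0)
      (Set.Ioi (0 : ℝ)) := by
  have hA : 0 ≤ A := (ContinuousLinearMap.nonneg_iff_isPositive A).2 hApos
  have hconv : ConvexOn ℝ (Ioi 0) fun s => glim γ (dilatedZetaFn b A s) := by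
    by_cases hζ : Memℓp (zetaFn b A) ∞
    · exact convexOn_glim γ (convex_Ioi 0) _ (fun s hs => (memℓp_dilatedZetaFn_iff b A hs).2 hζ)
        fun s₁ hs₁ s₂ hs₂ a c ha hc hac => eventually_dilatedZetaFn_le b hA hs₁ hs₂ ha hc hac
    · exact (convexOn_const 0 (convex_Ioi 0)).congr fun s hs =>
        (glim_of_not_memℓp γ (mt (memℓp_dilatedZetaFn_iff b A hs).1 hζ)).symm
  exact ⟨hconv, hconv.continuousOn isOpen_Ioi⟩

/-- For a generalised limit `γ` and `A ∈ M_{1,∞}^+`, the map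
`s ↦ s⁻¹·ζ_{γ∘σ_s}(A) = γ(t ↦ (1/t)Tr(A^{1+s/t}))` is convex, and hence continuous,
on `(0,∞)`. -/
theorem stmt6 {ι : Type*} (b : HilbertBasis ι ℂ H) (γ : GeneralisedLimit)
    (A : H →L[ℂ] H) (hA : MemM1 A) (hApos : A.IsPositive) :
    ConvexOn ℝ (Set.Ioi (0 : ℝ)) (fun s : ℝ =>
      glim γ fun t =>
        if 0 < t then t⁻¹ * trR b (cfc (fun x : ℝ => x ^ (1 + s / t)) A) else 0) ∧
    ContinuousOn (fun s : ℝ =>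
      glim γ fun t =>
        if 0 < t then t⁻¹ * trR b (cfc (fun x : ℝ => x ^ (1 + s / t)) A) else 0)
      (Set.Ioi (0 : ℝ)) :=
  stmt6_general b γ A hApos
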